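/- For every fixed δ > 0, the mapping s ↦ log ρ(A_{(s,δ)}) is convex on ℝ₊ = [0,∞). -/

import Mathlib

open MeasureTheory ProbabilityTheory Filter

noncomputable section

/-- Spectral radius of a real square matrix: the largest modulus of a complex root of
its characteristic polynomial. -/
def specRad {N : ℕ} (M : Matrix (Fin N) (Fin N) ℝ) : ℝ :=
  sSup {r : ℝ | ∃ z : ℂ, (M.map (Complex.ofReal ·)).charpoly.IsRoot z ∧ r = ‖z‖}

/-- The setting of de Saporta and Yao "Tail of a linear diffusion with Markov switching":
a stationary Markov jump process `X` on `E = Fin N` (`N > 1`), with positive intensity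
function `lam`, irreducible jump kernel `q` vanishing on the diagonal, invariant probability
vector `μ` (`μ Q = 0` for the generator `Q i j = lam i * (q i j - δ_{ij})`), right-continuous
step sample paths, transition semigroup `exp(tQ)` and marginal law `μ` at every time,
together with a coefficient function `a : E → ℝ`. -/
structure MSS (N : ℕ) (Ω : Type*) [MeasurableSpace Ω] where
  hN : 1 < N
  lam : Fin N → ℝ
  hlam : ∀ i, 0 < lam i
  q : Matrix (Fin N) (Fin N) ℝ
  hq_nonneg : ∀ i j, 0 ≤ q i j
  hq_row : ∀ i, ∑ j, q i j = 1
  hq_diag : ∀ i, q i i = 0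
  hq_irred : ∀ i j, ∃ k, 1 ≤ k ∧ 0 < (q ^ k) i j
  μ : Fin N → ℝ
  hμ_pos : ∀ i, 0 < μ i
  hμ_sum : ∑ i, μ i = 1
  hμ_inv : ∀ j, ∑ i, μ i * (lam i * (q i j - if i = j then 1 else 0)) = 0
  a : Fin N → ℝ
  P : Measure Ω
  hP : IsProbabilityMeasure P
  X : ℝ → Ω → Fin N
  hX_meas : ∀ t, Measurable (X t)
  hX_rightcont : ∀ ω t, ∃ ε > 0, ∀ u ∈ Set.Ico t (t + ε), X u ω = X t ω
  hX_stationary : ∀ (h : ℝ) (n : ℕ) (ts : Fin n → ℝ) (is : Fin n → Fin N),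
      P {ω | ∀ k, X (ts k + h) ω = is k} = P {ω | ∀ k, X (ts k) ω = is k}
  hX_marginal : ∀ t i, P {ω | X t ω = i} = ENNReal.ofReal (μ i)
  hX_markov : ∀ s t : ℝ, s ≤ t → ∀ f : Fin N → ℝ,
      (P[(fun ω => f (X t ω)) | ⨆ u ∈ Set.Iic s, MeasurableSpace.comap (X u) ⊤])
        =ᵐ[P] fun ω =>
          ∑ j, (NormedSpace.exp ((t - s) •
              (Matrix.of fun i j => lam i * (q i j - if i = j then 1 else 0)))) (X s ω) j * f j

namespace MSS

variable {N : ℕ} {Ω : Type*} [MeasurableSpace Ω] (S : MSS N Ω)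

/-- `Φ(s,t) = exp ∫_s^t a(X_u) du`. -/
def Phi (s t : ℝ) (ω : Ω) : ℝ := Real.exp (∫ u in s..t, S.a (S.X u ω))

/-- The conditional law `P_i = P_μ(· | X_0 = i)`. -/
def condP (i : Fin N) : Measure Ω := S.P[|{ω | S.X 0 ω = i}]

/-- The matrix `A_{(s,δ)}` with entries `(A_{(s,δ)})_{ij} = E_i[Φ(0,δ)^s 1_{X_δ = j}]`. -/
def A (s δ : ℝ) : Matrix (Fin N) (Fin N) ℝ :=
  Matrix.of fun i j => ∫ ω in {ω | S.X δ ω = j}, (S.Phi 0 δ ω) ^ s ∂(S.condP i)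

/-- `s₁ = min {λ(i)/a(i) : i ∈ E, a(i) > 0}`. -/
def s1 : ℝ := sInf {r : ℝ | ∃ i, 0 < S.a i ∧ r = S.lam i / S.a i}

/-- The matrix `M_s` with entries `(M_s)_{ij} = q(i,j) λ(i)/(λ(i) - s a(i))`. -/
def M (s : ℝ) : Matrix (Fin N) (Fin N) ℝ :=
  Matrix.of fun i j => S.q i j * S.lam i / (S.lam i - s * S.a i)

end MSS

/-- The setting extended with a volatility function `sig : E → ℝ` and an i.i.d. standard
Gaussian sequence `(ξ_n)_{n ∈ ℤ}` independent of `X`. -/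
structure MSSN (N : ℕ) (Ω : Type*) [MeasurableSpace Ω] extends MSS N Ω where
  sig : Fin N → ℝ
  ξ : ℤ → Ω → ℝ
  hξ_meas : ∀ n, Measurable (ξ n)
  hξ_law : ∀ n, P.map (ξ n) = gaussianReal 0 1
  hξ_iid : iIndepFun (m := fun _ : ℤ => (inferInstance : MeasurableSpace ℝ)) ξ P
  hξ_indepX : Indep (⨆ n : ℤ, MeasurableSpace.comap (ξ n) inferInstance)
      (⨆ t : ℝ, MeasurableSpace.comap (X t) ⊤) P

namespace MSSN

variable {N : ℕ} {Ω : Type*} [MeasurableSpace Ω] (S : MSSN N Ω)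

/-- `V_n = ∫_{n-1}^n exp(2 ∫_u^n a(X_v) dv) σ(X_u)² du`. -/
def V (n : ℤ) (ω : Ω) : ℝ :=
  ∫ u in ((n : ℝ) - 1)..(n : ℝ),
    Real.exp (2 * ∫ v in u..(n : ℝ), S.a (S.X v ω)) * (S.sig (S.X u ω)) ^ 2

/-- `b_n = V_n^{1/2} ξ_n`. -/
def b (n : ℤ) (ω : Ω) : ℝ := Real.sqrt (S.V n ω) * S.ξ n ω

/-- `Φ_n = Φ(n-1, n)`. -/
def Phin (n : ℤ) (ω : Ω) : ℝ := S.toMSS.Phi ((n : ℝ) - 1) (n : ℝ) ω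

/-- `Π_n = Φ_1 Φ_0 ⋯ Φ_{2-n}` (with `Π_0 = 1`). -/
def Pi (n : ℕ) (ω : Ω) : ℝ := ∏ k ∈ Finset.range n, S.Phin (1 - k) ω

/-- The partial sum `R_1^n = ∑_{k=0}^{n-1} Π_k b_{1-k}` (with `R_1^0 = 0`). -/
def R1part (n : ℕ) (ω : Ω) : ℝ := ∑ k ∈ Finset.range n, S.Pi k ω * S.b (1 - k) ω

/-- `R_1 = ∑_{k=0}^∞ Φ_1 Φ_0 ⋯ Φ_{2-k} b_{1-k}`, the stationary solution at time 1. -/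
def R1 (ω : Ω) : ℝ := ∑' k : ℕ, S.Pi k ω * S.b (1 - k) ω

/-- `ν`, the law of `R_1` under `P_μ`: the stationary law of the Markov-switching
diffusion `dY_t = a(X_t) Y_t dt + σ(X_t) dW_t`. -/
def ν : Measure ℝ := S.P.map S.R1

end MSSN

/-- `m` is a median of `Z` conditionally on the event `B`:
`P(Z ≤ m | B) ≥ 1/2` and `P(Z ≥ m | B) ≥ 1/2`. -/
def IsCondMedian {Ω : Type*} [MeasurableSpace Ω] (P : Measure Ω) (B : Set Ω)
    (Z : Ω → ℝ) (m : ℝ) : Prop :=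
  1/2 ≤ P[|B] {ω | Z ω ≤ m} ∧ 1/2 ≤ P[|B] {ω | m ≤ Z ω}

/-!
Each entry `s ↦ E_i[Φ(0,δ)^s 1_{X_δ = j}]` of `A_{(s,δ)}` is the moment generating function of
`log Φ(0,δ)` under a finite measure, hence log-convex by Hölder's inequality. For entrywise
nonnegative matrices, the inequality `C ≤ A^θ B^η` (entrywise, `θ + η = 1`) propagates to all
powers and then to row sums by the discrete Hölder inequality, hence to the `L∞`-operator norms of
the powers, and by Gelfand's formula to the spectral radii: `ρ(C) ≤ ρ(A)^θ ρ(B)^η`. Taking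
logarithms needs `ρ(A_{(s,δ)}) > 0`, which holds because every row sum of `A_{(s,δ)}` is a
positive moment generating function and `ρ` dominates the minimal row sum of a nonnegative matrix.
-/

-- Matrix norms are `L∞`-operator norms: the maximal `ℓ¹`-norm of a row.
attribute [local instance] Matrix.linftyOpSeminormedAddCommGroup
  Matrix.linftyOpNormedAddCommGroup Matrix.linftyOpNormedRing Matrix.linftyOpNormedAlgebra

open Real Topology Set

theorem Finset.sum_rpow_mul_rpow_le {ι : Type*} (s : Finset ι) {f g : ι → ℝ} {θ η : ℝ}
    (hθ : 0 < θ) (hη : 0 < η) (hθη : θ + η = 1)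
    (hf : ∀ i ∈ s, 0 ≤ f i) (hg : ∀ i ∈ s, 0 ≤ g i) :
    ∑ i ∈ s, f i ^ θ * g i ^ η ≤ (∑ i ∈ s, f i) ^ θ * (∑ i ∈ s, g i) ^ η := by
  have hpq : HolderConjugate θ⁻¹ η⁻¹ :=
    holderConjugate_iff.mpr ⟨(one_lt_inv₀ hθ).mpr (by linarith), by simpa using hθη⟩
  have key := inner_le_Lp_mul_Lq_of_nonneg s hpq (fun i hi => rpow_nonneg (hf i hi) θ)
    (fun i hi => rpow_nonneg (hg i hi) η)
  simp only [one_div, inv_inv] at key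
  convert key using 3 <;> refine Finset.sum_congr rfl fun i hi => ?_
  · rw [← rpow_mul (hf i hi), mul_inv_cancel₀ hθ.ne', rpow_one]
  · rw [← rpow_mul (hg i hi), mul_inv_cancel₀ hη.ne', rpow_one]

namespace Matrix

variable {ι : Type*} [Fintype ι] [DecidableEq ι]

theorem linfty_opNorm_map_eq {m n α β : Type*} [Fintype m] [Fintype n]
    [SeminormedAddCommGroup α] [SeminormedAddCommGroup β] (A : Matrix m n α) (f : α → β)
    (hf : ∀ a, ‖f a‖₊ = ‖a‖₊) : ‖A.map f‖ = ‖A‖ := by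
  simp only [linfty_opNorm_def, map_apply, hf]

theorem pow_apply_le_rpow_mul_rpow {A B C : Matrix ι ι ℝ} {θ η : ℝ}
    (hθ : 0 < θ) (hη : 0 < η) (hθη : θ + η = 1)
    (hA : ∀ i j, 0 ≤ A i j) (hB : ∀ i j, 0 ≤ B i j) (hC₀ : ∀ i j, 0 ≤ C i j)
    (hC : ∀ i j, C i j ≤ A i j ^ θ * B i j ^ η) (k : ℕ) (i j : ι) :
    (C ^ k) i j ≤ (A ^ k) i j ^ θ * (B ^ k) i j ^ η := by
  induction k generalizing j with
  | zero =>
    by_cases h : i = j <;> simp [h, zero_rpow hθ.ne', zero_rpow hη.ne']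
  | succ m ih =>
    have hAm := pow_apply_nonneg hA m i
    have hBm := pow_apply_nonneg hB m i
    simp only [pow_succ, mul_apply]
    calc ∑ l, (C ^ m) i l * C l j
        ≤ ∑ l, ((A ^ m) i l * A l j) ^ θ * ((B ^ m) i l * B l j) ^ η := by
          refine Finset.sum_le_sum fun l _ => ?_
          rw [mul_rpow (hAm l) (hA l j), mul_rpow (hBm l) (hB l j),
            mul_mul_mul_comm]
          exact mul_le_mul (ih l) (hC l j) (hC₀ l j)
            (mul_nonneg (rpow_nonneg (hAm l) θ) (rpow_nonneg (hBm l) η))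
      _ ≤ _ := Finset.sum_rpow_mul_rpow_le _ hθ hη hθη
          (fun l _ => mul_nonneg (hAm l) (hA l j)) (fun l _ => mul_nonneg (hBm l) (hB l j))

theorem sum_apply_le_linfty_opNorm {M : Matrix ι ι ℝ} (hM : ∀ i j, 0 ≤ M i j) (i : ι) :
    ∑ j, M i j ≤ ‖M‖ := by
  rw [linfty_opNorm_def]
  calc ∑ j, M i j = ((∑ j, ‖M i j‖₊ : NNReal) : ℝ) := by
        simp [Real.norm_of_nonneg (hM i _)]
    _ ≤ _ := NNReal.coe_le_coe.mpr
        (Finset.le_sup (f := fun i => ∑ j, ‖M i j‖₊) (Finset.mem_univ i))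

theorem linfty_opNorm_le_of_sum_apply_le {M : Matrix ι ι ℝ} (hM : ∀ i j, 0 ≤ M i j) {c : ℝ}
    (hc : 0 ≤ c) (h : ∀ i, ∑ j, M i j ≤ c) : ‖M‖ ≤ c := by
  lift c to NNReal using hc
  rw [linfty_opNorm_def, NNReal.coe_le_coe]
  refine Finset.sup_le fun i _ => ?_
  rw [← NNReal.coe_le_coe, NNReal.coe_sum]
  simpa [Real.norm_of_nonneg (hM i _)] using h i

theorem linfty_opNorm_pow_le_rpow_mul_rpow {A B C : Matrix ι ι ℝ} {θ η : ℝ}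
    (hθ : 0 < θ) (hη : 0 < η) (hθη : θ + η = 1)
    (hA : ∀ i j, 0 ≤ A i j) (hB : ∀ i j, 0 ≤ B i j) (hC₀ : ∀ i j, 0 ≤ C i j)
    (hC : ∀ i j, C i j ≤ A i j ^ θ * B i j ^ η) (k : ℕ) :
    ‖C ^ k‖ ≤ ‖A ^ k‖ ^ θ * ‖B ^ k‖ ^ η := by
  refine linfty_opNorm_le_of_sum_apply_le (pow_apply_nonneg hC₀ k) (by positivity) fun i => ?_
  have hAk := pow_apply_nonneg hA k i
  have hBk := pow_apply_nonneg hB k i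
  calc ∑ j, (C ^ k) i j ≤ ∑ j, (A ^ k) i j ^ θ * (B ^ k) i j ^ η :=
        Finset.sum_le_sum fun j _ => pow_apply_le_rpow_mul_rpow hθ hη hθη hA hB hC₀ hC k i j
    _ ≤ (∑ j, (A ^ k) i j) ^ θ * (∑ j, (B ^ k) i j) ^ η :=
        Finset.sum_rpow_mul_rpow_le _ hθ hη hθη (fun j _ => hAk j) (fun j _ => hBk j)
    _ ≤ ‖A ^ k‖ ^ θ * ‖B ^ k‖ ^ η := by
        have hA' := sum_apply_le_linfty_opNorm (pow_apply_nonneg hA k) i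
        have hB' := sum_apply_le_linfty_opNorm (pow_apply_nonneg hB k) i
        have hA₀ := Finset.sum_nonneg fun j (_ : j ∈ Finset.univ) => hAk j
        have hB₀ := Finset.sum_nonneg fun j (_ : j ∈ Finset.univ) => hBk j
        gcongr

theorem pow_le_sum_pow_apply {M : Matrix ι ι ℝ} (hM : ∀ i j, 0 ≤ M i j) {r : ℝ} (hr₀ : 0 ≤ r)
    (hr : ∀ i, r ≤ ∑ j, M i j) (k : ℕ) (i : ι) : r ^ k ≤ ∑ j, (M ^ k) i j := by
  induction k generalizing i with
  | zero => simp [one_apply]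
  | succ k ih =>
    calc r ^ (k + 1) = r * r ^ k := pow_succ' _ _
      _ ≤ (∑ l, M i l) * r ^ k := mul_le_mul_of_nonneg_right (hr i) (by positivity)
      _ = ∑ l, M i l * r ^ k := Finset.sum_mul _ _ _
      _ ≤ ∑ l, M i l * ∑ j, (M ^ k) l j :=
          Finset.sum_le_sum fun l _ => mul_le_mul_of_nonneg_left (ih l) (hM i l)
      _ = ∑ j, (M ^ (k + 1)) i j := by
          simp only [pow_succ', mul_apply, Finset.mul_sum]
          exact Finset.sum_comm

theorem pow_le_linfty_opNorm_pow [Nonempty ι] {M : Matrix ι ι ℝ} (hM : ∀ i j, 0 ≤ M i j)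
    {r : ℝ} (hr₀ : 0 ≤ r) (hr : ∀ i, r ≤ ∑ j, M i j) (k : ℕ) : r ^ k ≤ ‖M ^ k‖ :=
  (pow_le_sum_pow_apply hM hr₀ hr k (Classical.arbitrary ι)).trans
    (sum_apply_le_linfty_opNorm (pow_apply_nonneg hM k) _)

end Matrix

section SpectralRadius

variable {n : ℕ} [NeZero n]

theorem specRad_eq_toReal_spectralRadius (M : Matrix (Fin n) (Fin n) ℝ) :
    specRad M = (spectralRadius ℂ (M.map (Complex.ofReal ·))).toReal := by
  obtain ⟨z₀, hz₀, hz₀_eq⟩ := spectrum.exists_nnnorm_eq_spectralRadius (M.map (Complex.ofReal ·))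
  have hgreatest : IsGreatest
      {r : ℝ | ∃ z : ℂ, (M.map (Complex.ofReal ·)).charpoly.IsRoot z ∧ r = ‖z‖} ‖z₀‖ := by
    refine ⟨⟨z₀, Matrix.mem_spectrum_iff_isRoot_charpoly.mp hz₀, rfl⟩, ?_⟩
    rintro r ⟨z, hz, rfl⟩
    have : (‖z‖₊ : ENNReal) ≤ ‖z₀‖₊ :=
      hz₀_eq ▸ le_iSup₂ (f := fun k (_ : k ∈ spectrum ℂ _) => (‖k‖₊ : ENNReal)) z
        (Matrix.mem_spectrum_iff_isRoot_charpoly.mpr hz)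
    exact_mod_cast this
  rw [specRad, hgreatest.csSup_eq, ← hz₀_eq, ENNReal.coe_toReal, coe_nnnorm]

theorem spectralRadius_map_ofReal_ne_top (M : Matrix (Fin n) (Fin n) ℝ) :
    spectralRadius ℂ (M.map (Complex.ofReal ·)) ≠ ⊤ := by
  obtain ⟨z₀, -, hz₀_eq⟩ := spectrum.exists_nnnorm_eq_spectralRadius (M.map (Complex.ofReal ·))
  exact hz₀_eq ▸ ENNReal.coe_ne_top

theorem tendsto_norm_pow_rpow_one_div_specRad (M : Matrix (Fin n) (Fin n) ℝ) :
    Tendsto (fun k : ℕ => ‖M ^ k‖ ^ (1 / k : ℝ)) atTop (𝓝 (specRad M)) := by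
  have h := (ENNReal.tendsto_toReal (spectralRadius_map_ofReal_ne_top M)).comp
    (spectrum.pow_norm_pow_one_div_tendsto_nhds_spectralRadius (M.map (Complex.ofReal ·)))
  rw [specRad_eq_toReal_spectralRadius]
  refine h.congr fun k => ?_
  have hmap : (M.map (Complex.ofReal ·)) ^ k = (M ^ k).map (Complex.ofReal ·) :=
    (map_pow Complex.ofRealHom.mapMatrix M k).symm
  simp only [Function.comp_apply, hmap]
  rw [ENNReal.toReal_ofReal (by positivity),
    Matrix.linfty_opNorm_map_eq _ _ fun _ => Complex.nnnorm_real _]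

theorem specRad_le_rpow_mul_rpow {A B C : Matrix (Fin n) (Fin n) ℝ} {θ η : ℝ}
    (hθ : 0 < θ) (hη : 0 < η) (hθη : θ + η = 1)
    (hA : ∀ i j, 0 ≤ A i j) (hB : ∀ i j, 0 ≤ B i j) (hC₀ : ∀ i j, 0 ≤ C i j)
    (hC : ∀ i j, C i j ≤ A i j ^ θ * B i j ^ η) :
    specRad C ≤ specRad A ^ θ * specRad B ^ η := by
  have hlim := ((tendsto_norm_pow_rpow_one_div_specRad A).rpow_const (Or.inr hθ.le)).mul
    ((tendsto_norm_pow_rpow_one_div_specRad B).rpow_const (Or.inr hη.le))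
  refine le_of_tendsto_of_tendsto' (tendsto_norm_pow_rpow_one_div_specRad C) hlim fun k => ?_
  calc ‖C ^ k‖ ^ (1 / k : ℝ) ≤ (‖A ^ k‖ ^ θ * ‖B ^ k‖ ^ η) ^ (1 / k : ℝ) := by
        gcongr
        exact Matrix.linfty_opNorm_pow_le_rpow_mul_rpow hθ hη hθη hA hB hC₀ hC k
    _ = (‖A ^ k‖ ^ (1 / k : ℝ)) ^ θ * (‖B ^ k‖ ^ (1 / k : ℝ)) ^ η := by
        rw [mul_rpow (by positivity) (by positivity), ← rpow_mul (norm_nonneg _),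
          ← rpow_mul (norm_nonneg _), ← rpow_mul (norm_nonneg _), ← rpow_mul (norm_nonneg _),
          mul_comm θ, mul_comm η]

theorem le_specRad_of_le_sum_apply {M : Matrix (Fin n) (Fin n) ℝ} (hM : ∀ i j, 0 ≤ M i j)
    {r : ℝ} (hr₀ : 0 ≤ r) (hr : ∀ i, r ≤ ∑ j, M i j) : r ≤ specRad M := by
  refine ge_of_tendsto (tendsto_norm_pow_rpow_one_div_specRad M) ?_
  filter_upwards [eventually_ne_atTop 0] with k hk
  calc r = (r ^ k) ^ (1 / k : ℝ) := by
        rw [← rpow_natCast, ← rpow_mul hr₀, mul_one_div_cancel (by exact_mod_cast hk), rpow_one]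
    _ ≤ ‖M ^ k‖ ^ (1 / k : ℝ) := by
        gcongr
        exact Matrix.pow_le_linfty_opNorm_pow hM hr₀ hr k

end SpectralRadius

theorem convexOn_log_of_le_rpow_mul_rpow {E : Type*} [AddCommGroup E] [Module ℝ E] {s : Set E}
    {f : E → ℝ} (hs : Convex ℝ s) (hf : ∀ x ∈ s, 0 < f x)
    (h : ∀ x ∈ s, ∀ y ∈ s, ∀ θ η : ℝ, 0 < θ → 0 < η → θ + η = 1 →
      f (θ • x + η • y) ≤ f x ^ θ * f y ^ η) :
    ConvexOn ℝ s fun x => log (f x) := by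
  refine convexOn_iff_forall_pos.mpr ⟨hs, fun x hx y hy θ η hθ hη hθη => ?_⟩
  have hfx := hf x hx
  have hfy := hf y hy
  calc log (f (θ • x + η • y)) ≤ log (f x ^ θ * f y ^ η) :=
        log_le_log (hf _ (hs hx hy hθ.le hη.le hθη)) (h x hx y hy θ η hθ hη hθη)
    _ = θ • log (f x) + η • log (f y) := by
        rw [log_mul (rpow_pos_of_pos hfx θ).ne' (rpow_pos_of_pos hfy η).ne', log_rpow hfx,
          log_rpow hfy, smul_eq_mul, smul_eq_mul]

namespace ProbabilityTheory

variable {Ω : Type*} [MeasurableSpace Ω] {X : Ω → ℝ} {μ : Measure Ω}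

theorem mgf_mul_add_mul_le {x y θ η : ℝ} (hx : Integrable (fun ω => exp (x * X ω)) μ)
    (hy : Integrable (fun ω => exp (y * X ω)) μ) (hθ : 0 ≤ θ) (hη : 0 ≤ η) (hθη : θ + η = 1) :
    mgf X μ (θ * x + η * y) ≤ mgf X μ x ^ θ * mgf X μ y ^ η := by
  by_cases hint : Integrable (fun ω => exp ((θ * x + η * y) * X ω)) μ
  swap
  · rw [mgf_undef hint]
    exact mul_nonneg (rpow_nonneg mgf_nonneg θ) (rpow_nonneg mgf_nonneg η)
  have hofReal : ∀ {t}, Integrable (fun ω => exp (t * X ω)) μ →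
      ENNReal.ofReal (mgf X μ t) = ∫⁻ ω, ENNReal.ofReal (exp (t * X ω)) ∂μ := fun ht =>
    ofReal_integral_eq_lintegral_ofReal ht (ae_of_all _ fun _ => (exp_pos _).le)
  have hsplit : ∀ ω, ENNReal.ofReal (exp ((θ * x + η * y) * X ω)) =
      ENNReal.ofReal (exp (x * X ω)) ^ θ * ENNReal.ofReal (exp (y * X ω)) ^ η := fun ω => by
    rw [ENNReal.ofReal_rpow_of_nonneg (exp_pos _).le hθ,
      ENNReal.ofReal_rpow_of_nonneg (exp_pos _).le hη, ← ENNReal.ofReal_mul (by positivity),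
      ← exp_mul, ← exp_mul, ← exp_add]
    ring_nf
  have hx₀ : 0 ≤ mgf X μ x ^ θ := rpow_nonneg mgf_nonneg θ
  rw [← ENNReal.ofReal_le_ofReal_iff (mul_nonneg hx₀ (rpow_nonneg mgf_nonneg η)),
    ENNReal.ofReal_mul hx₀,
    ← ENNReal.ofReal_rpow_of_nonneg mgf_nonneg hθ, ← ENNReal.ofReal_rpow_of_nonneg mgf_nonneg hη,
    hofReal hint, hofReal hx, hofReal hy, lintegral_congr fun ω => hsplit ω]
  exact ENNReal.lintegral_mul_norm_pow_le
    (ENNReal.measurable_ofReal.comp_aemeasurable hx.aemeasurable)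
    (ENNReal.measurable_ofReal.comp_aemeasurable hy.aemeasurable) hθ hη hθη

end ProbabilityTheory

section PathMeasurability

variable {Ω : Type*} [MeasurableSpace Ω]

theorem measurable_uncurry_of_continuousWithinAt_Ici {β : Type*} [TopologicalSpace β]
    [TopologicalSpace.PseudoMetrizableSpace β] [MeasurableSpace β] [BorelSpace β] {X : ℝ → Ω → β}
    (hX : ∀ t, Measurable (X t)) (hcont : ∀ ω t, ContinuousWithinAt (fun u => X u ω) (Ici t) t) :
    Measurable fun p : ℝ × Ω => X p.1 p.2 := by
  set grid : ℕ → ℝ → ℝ := fun m t => (⌈t * (m + 1)⌉ : ℝ) / (m + 1)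
  have hgrid_meas (m : ℕ) : Measurable fun p : ℝ × Ω => X (grid m p.1) p.2 := by
    have hcountable : Measurable fun q : Ω × ℤ => X (q.2 / (m + 1)) q.1 :=
      measurable_from_prod_countable_left fun k => hX ((k : ℝ) / (m + 1))
    exact hcountable.comp (measurable_snd.prodMk (Int.measurable_ceil.comp
      (measurable_fst.mul_const _)))
  have hgrid_tendsto (t : ℝ) : Tendsto (fun m => grid m t) atTop (𝓝[≥] t) := by
    have hle (m : ℕ) : t ≤ grid m t := by
      rw [le_div_iff₀ (by positivity)]
      exact Int.le_ceil _
    have hge (m : ℕ) : grid m t ≤ t + 1 / (m + 1) := by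
      rw [div_le_iff₀ (by positivity), add_mul, one_div_mul_cancel (by positivity)]
      exact (Int.ceil_lt_add_one _).le
    refine tendsto_nhdsWithin_iff.mpr ⟨?_, Eventually.of_forall hle⟩
    refine tendsto_of_tendsto_of_tendsto_of_le_of_le tendsto_const_nhds ?_ hle hge
    simpa using tendsto_const_nhds.add (tendsto_one_div_add_atTop_nhds_zero_nat (𝕜 := ℝ))
  refine measurable_of_tendsto_metrizable hgrid_meas (tendsto_pi_nhds.mpr fun p => ?_)
  exact (hcont p.2 p.1).tendsto.comp (hgrid_tendsto p.1)

theorem StronglyMeasurable.intervalIntegral_prod_right' {E : Type*} [NormedAddCommGroup E]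
    [NormedSpace ℝ E] {f : Ω × ℝ → E} (hf : StronglyMeasurable f) (a b : ℝ) :
    StronglyMeasurable fun ω => ∫ u in a..b, f (ω, u) :=
  (hf.integral_prod_right' (ν := volume.restrict (Ioc a b))).sub
    (hf.integral_prod_right' (ν := volume.restrict (Ioc b a)))

end PathMeasurability

namespace MSS

variable {N : ℕ} {Ω : Type*} [MeasurableSpace Ω] (S : MSS N Ω)

theorem neZero (S : MSS N Ω) : NeZero N := ⟨by have := S.hN; omega⟩

def logPhi (s t : ℝ) (ω : Ω) : ℝ := ∫ u in s..t, S.a (S.X u ω)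

theorem Phi_rpow (s t r : ℝ) (ω : Ω) : S.Phi s t ω ^ r = exp (r * S.logPhi s t ω) := by
  rw [Phi, ← exp_mul, mul_comm]
  rfl

theorem measurable_logPhi (s t : ℝ) : Measurable (S.logPhi s t) := by
  have hpath : ∀ ω t, ContinuousWithinAt (fun u => S.a (S.X u ω)) (Ici t) t := fun ω t => by
    obtain ⟨ε, hε, hconst⟩ := S.hX_rightcont ω t
    refine tendsto_const_nhds.congr' ?_
    filter_upwards [Ico_mem_nhdsGE (lt_add_of_pos_right t hε)] with u hu
    rw [hconst u hu]
  have hjoint := measurable_uncurry_of_continuousWithinAt_Ici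
    (fun t => (measurable_of_countable S.a).comp (S.hX_meas t)) hpath
  exact (StronglyMeasurable.intervalIntegral_prod_right'
    (hjoint.comp measurable_swap).stronglyMeasurable s t).measurable

theorem abs_logPhi_le {C : ℝ} (hC : ∀ i, |S.a i| ≤ C) (s t : ℝ) (ω : Ω) :
    |S.logPhi s t ω| ≤ C * |t - s| :=
  intervalIntegral.norm_integral_le_of_norm_le_const (f := fun u => S.a (S.X u ω))
    fun u _ => hC (S.X u ω)

theorem integrable_exp_mul_logPhi (μ : Measure Ω) [IsFiniteMeasure μ] (r s t : ℝ) :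
    Integrable (fun ω => exp (r * S.logPhi s t ω)) μ := by
  obtain ⟨C, hC⟩ := Finite.exists_le fun i => |S.a i|
  refine Integrable.of_bound ((S.measurable_logPhi s t).const_mul r).exp.aestronglyMeasurable
    (exp (|r| * (C * |t - s|))) (ae_of_all _ fun ω => ?_)
  rw [norm_of_nonneg (exp_pos _).le, exp_le_exp]
  calc r * S.logPhi s t ω ≤ |r| * |S.logPhi s t ω| := (le_abs_self _).trans (abs_mul _ _).le
    _ ≤ |r| * (C * |t - s|) := by gcongr; exact S.abs_logPhi_le hC s t ω

instance isProbabilityMeasure_condP (i : Fin N) : IsProbabilityMeasure (S.condP i) := by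
  have := S.hP
  refine cond_isProbabilityMeasure ?_
  rw [S.hX_marginal 0 i]
  exact (ENNReal.ofReal_pos.mpr (S.hμ_pos i)).ne'

theorem A_apply_eq_mgf (s δ : ℝ) (i j : Fin N) :
    S.A s δ i j = mgf (S.logPhi 0 δ) ((S.condP i).restrict {ω | S.X δ ω = j}) s := by
  simp only [A, Matrix.of_apply, mgf, Phi_rpow]

theorem sum_A_apply_eq_mgf (s δ : ℝ) (i : Fin N) :
    ∑ j, S.A s δ i j = mgf (S.logPhi 0 δ) (S.condP i) s := by
  have hmeas (j : Fin N) : MeasurableSet {ω | S.X δ ω = j} :=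
    S.hX_meas δ (measurableSet_singleton j)
  have hunion : (⋃ j, {ω | S.X δ ω = j}) = univ := iUnion_eq_univ_iff.mpr fun ω => ⟨_, rfl⟩
  simp only [A_apply_eq_mgf, mgf]
  rw [← integral_iUnion_fintype hmeas
    (fun j k hjk => disjoint_left.mpr fun ω hj hk => hjk (hj.symm.trans hk))
    fun _ => (S.integrable_exp_mul_logPhi _ s 0 δ).integrableOn, hunion, Measure.restrict_univ]

theorem A_nonneg (s δ : ℝ) (i j : Fin N) : 0 ≤ S.A s δ i j := by
  rw [A_apply_eq_mgf]
  exact mgf_nonneg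

theorem A_apply_le_rpow_mul_rpow {θ η : ℝ} (hθ : 0 ≤ θ) (hη : 0 ≤ η) (hθη : θ + η = 1)
    (x y δ : ℝ) (i j : Fin N) :
    S.A (θ * x + η * y) δ i j ≤ S.A x δ i j ^ θ * S.A y δ i j ^ η := by
  simp only [A_apply_eq_mgf]
  exact mgf_mul_add_mul_le (S.integrable_exp_mul_logPhi _ x 0 δ)
    (S.integrable_exp_mul_logPhi _ y 0 δ) hθ hη hθη

theorem specRad_A_pos (s δ : ℝ) : 0 < specRad (S.A s δ) := by
  have := S.neZero
  set r := Finset.univ.inf' Finset.univ_nonempty fun i => ∑ j, S.A s δ i j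
  have hr : 0 < r := (Finset.lt_inf'_iff _).mpr fun i _ => by
    rw [sum_A_apply_eq_mgf]
    exact mgf_pos (S.integrable_exp_mul_logPhi _ s 0 δ)
  exact hr.trans_le (le_specRad_of_le_sum_apply (S.A_nonneg s δ) hr.le
    fun i => Finset.inf'_le _ (Finset.mem_univ i))

end MSS

theorem log_specRad_convex_general {N : ℕ} {Ω : Type*} [MeasurableSpace Ω]
    (S : MSS N Ω) (δ : ℝ) :
    ConvexOn ℝ (Set.Ici 0) (fun s : ℝ => Real.log (specRad (S.A s δ))) := by
  have := S.neZero
  refine convexOn_log_of_le_rpow_mul_rpow (convex_Ici 0) (fun s _ => S.specRad_A_pos s δ)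
    fun x _ y _ θ η hθ hη hθη => ?_
  exact specRad_le_rpow_mul_rpow hθ hη hθη (S.A_nonneg x δ) (S.A_nonneg y δ) (S.A_nonneg _ δ)
    (S.A_apply_le_rpow_mul_rpow hθ.le hη.le hθη x y δ)

/-- **Corollary 2.** For every fixed `δ > 0`, the map `s ↦ log ρ(A_{(s,δ)})` is convex
on `[0,∞)`. -/
theorem log_specRad_convex {N : ℕ} {Ω : Type*} [MeasurableSpace Ω]
    (S : MSS N Ω) (δ : ℝ) (hδ : 0 < δ) :
    ConvexOn ℝ (Set.Ici 0) (fun s : ℝ => Real.log (specRad (S.A s δ))) :=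
  log_specRad_convex_general S δ
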